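/- arXiv:1901.01594 — 6 statements merged into one kernel-verified Lean document; each statement's English description precedes it below -/
import Mathlib

section
/- Let A be a small category. The left Kan extension of the contravariant Yoneda embedding z_A : A ⥤ (A ⥤ Type)ᵒᵖ along the (covariant) Yoneda embedding y_A : A ⥤ (Aᵒᵖ ⥤ Type) is naturally isomorphic to the Isbell conjugation functor O_A sending a presheaf F to the copresheaf a ↦ Hom_{PSh(A)}(F, y_A a). -/
/-!
`O_A` is the opposite of `F ↦ Hom(F, y_A -)`, a functor turning colimits into limits, so `O_A`
preserves colimits. A colimit-preserving functor out of `PSh(A)` is the left Kan extension along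
`y_A` of its restriction to representables, and that restriction is `z_A` because the Yoneda
embedding is fully faithful: `PSh(A)(y_A a, y_A b) ≅ A(a, b)`.
-/

open CategoryTheory

universe u

variable (A : Type u) [SmallCategory A]

/-- The contravariant Yoneda embedding `z_A : A ⥤ (A ⥤ Type)ᵒᵖ`, `a ↦ A(a, -)`. -/
def contraYoneda : A ⥤ (A ⥤ Type u)ᵒᵖ :=
  coyoneda.rightOp

/-- The Isbell conjugation functor `O_A : PSh(A) ⥤ (A ⥤ Type)ᵒᵖ`, sending a presheaf `F`
to the copresheaf `a ↦ Hom_{PSh(A)}(F, y_A a)`. -/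
def isbellO : (Aᵒᵖ ⥤ Type u) ⥤ (A ⥤ Type u)ᵒᵖ :=
  (coyoneda ⋙ (Functor.whiskeringLeft A (Aᵒᵖ ⥤ Type u) (Type u)).obj yoneda).rightOp

namespace CategoryTheory

open Limits

universe v u₁ u₂

def Functor.FullyFaithful.compCoyonedaCompWhiskeringLeft {C : Type u₁} [Category.{v} C]
    {D : Type u₂} [Category.{v} D] {F : C ⥤ D} (hF : F.FullyFaithful) :
    F.op ⋙ coyoneda ⋙ (Functor.whiskeringLeft _ _ _).obj F ≅ coyoneda :=
  Functor.isoWhiskerLeft _ (Functor.isoWhiskerRight uliftCoyonedaIsoCoyoneda.{v}.symm _) ≪≫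
    hF.compUliftCoyonedaCompWhiskeringLeft ≪≫ uliftCoyonedaIsoCoyoneda.{v}

lemma Presheaf.isLeftKanExtension_along_yoneda_of_preservesColimits {C : Type u}
    [SmallCategory C] {ℰ : Type u₂} [Category.{u} ℰ] [HasColimits ℰ]
    (L : (Cᵒᵖ ⥤ Type u) ⥤ ℰ) [PreservesColimits L] {F : C ⥤ ℰ} (e : F ≅ yoneda ⋙ L) :
    L.IsLeftKanExtension e.hom := by
  -- the library's density theorem is about `uliftYoneda`; transport it along `uliftYoneda ≅ yoneda`
  let e' : F ≅ uliftYoneda.{u} ⋙ L :=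
    e ≪≫ Functor.isoWhiskerRight uliftYonedaIsoYoneda.{u}.symm L
  have h := (Functor.isLeftKanExtension_iff_postcomp₁ (𝟭 _)
    (Functor.rightUnitor _ ≪≫ uliftYonedaIsoYoneda.{u}.symm) e'.hom).1
    (Presheaf.isLeftKanExtension_of_preservesColimits.{0} L e')
  have e_hom_eq : e.hom = e'.hom ≫ Functor.whiskerRight
      (Functor.rightUnitor _ ≪≫ uliftYonedaIsoYoneda.{u}.symm).inv L ≫
      (Functor.associator _ _ _).hom := by
    ext
    simp [e']
  rw [e_hom_eq]
  exact h

end CategoryTheory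

open Limits in
instance isbellO_preservesColimits : PreservesColimits (isbellO A) :=
  preservesColimitsOfSize_rightOp _

noncomputable def contraYonedaIsoYonedaCompIsbellO : contraYoneda A ≅ yoneda ⋙ isbellO A :=
  (Functor.leftOpRightOpEquiv _ _).functor.mapIso
    Yoneda.fullyFaithful.compCoyonedaCompWhiskeringLeft.op

/-- The left Kan extension of the contravariant Yoneda embedding `z_A` along the (covariant)
Yoneda embedding `y_A` is the Isbell conjugation functor `O_A` (i.e. `O_A`, equipped with a
suitable canonical 2-cell, is a left Kan extension of `z_A` along `y_A`). -/
theorem isbellO_isLeftKanExtension_of_contraYoneda_along_yoneda :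
    ∃ α : contraYoneda A ⟶ yoneda ⋙ isbellO A,
      (isbellO A).IsLeftKanExtension α :=
  ⟨_, Presheaf.isLeftKanExtension_along_yoneda_of_preservesColimits _
    (contraYonedaIsoYonedaCompIsbellO A)⟩
end

section
/- For a small category A, restriction along the Yoneda embedding, μ_A : (PSh(A)ᵒᵖ ⥤ Type) ⥤ PSh(A) given by Θ ↦ (a ↦ Θ(y_A a)), is right adjoint to the Yoneda extension of the Yoneda embedding; moreover μ_A has the Yoneda embedding of PSh(A) as a fully faithful right adjoint, with invertible counit: μ_A ∘ y_{PSh(A)} ≅ 1_{PSh(A)}, exhibiting an adjunction μ_A ⊣ y_{PSh(A)} (on small presheaves). Concretely: the counit map Θ(F) ⟶ Hom_{PSh(A)}(F, a ↦ Θ(y_A a)) induced by functoriality of Θ, together with the Yoneda isomorphism μ_A(y_{PSh(A)}(P)) ≅ P, satisfy the triangle identities for an adjunction μ_A ⊣ y_{PSh(A)}. -/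
/-!
The counit is the Yoneda isomorphism `μ_A (y P) ≅ P`. The unit sends `x : Θ F` to the composite
`F ≅ μ_A (y F) ⟶ μ_A Θ`, whose second map is `μ_A` applied to the morphism `y F ⟶ Θ` classified
by `x`. Both triangle identities then reduce to the Yoneda lemma and the naturality of the Yoneda
isomorphism.
-/

open CategoryTheory

universe u

variable (A : Type u) [SmallCategory A]

/-- Restriction along the Yoneda embedding: `μ_A` sends a presheaf `Θ` on `PSh(A)` to the
presheaf `a ↦ Θ (y_A a)` on `A`. -/
def muA : ((Aᵒᵖ ⥤ Type u)ᵒᵖ ⥤ Type u) ⥤ (Aᵒᵖ ⥤ Type u) :=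
  (Functor.whiskeringLeft Aᵒᵖ ((Aᵒᵖ ⥤ Type u)ᵒᵖ) (Type u)).obj yoneda.op

lemma yonedaEquiv_symm_eq_yoneda_map {C : Type*} [Category C] {X Y : C} (f : X ⟶ Y) :
    (yonedaEquiv (F := yoneda.obj Y)).symm f = yoneda.map f := by
  rw [Equiv.symm_apply_eq, yonedaEquiv_yoneda_map]

namespace muA

variable {A}

variable (A) in
def yonedaCompIso : yoneda ⋙ muA A ≅ 𝟭 (Aᵒᵖ ⥤ Type u) := curriedYonedaLemma'

lemma yonedaEquiv_yonedaCompIso_inv_app_yoneda (a : A) :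
    yonedaEquiv ((yonedaCompIso A).inv.app (yoneda.obj a)) = 𝟙 (yoneda.obj a) :=
  (yonedaEquiv_symm_eq_yoneda_map (𝟙 a)).trans (yoneda.map_id a)

def unitApp (Θ : (Aᵒᵖ ⥤ Type u)ᵒᵖ ⥤ Type u) : Θ ⟶ yoneda.obj ((muA A).obj Θ) where
  app F := TypeCat.ofHom fun x =>
    (yonedaCompIso A).inv.app F.unop ≫ (muA A).map (yonedaEquiv.symm x)
  naturality F G g := by
    ext x : 3
    change _ ≫ (muA A).map (yonedaEquiv.symm (Θ.map g x)) = g.unop ≫ _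
    rw [yonedaEquiv_symm_map, Functor.map_comp]
    exact ((yonedaCompIso A).inv.naturality_assoc g.unop _).symm

lemma unitApp_app_apply (Θ : (Aᵒᵖ ⥤ Type u)ᵒᵖ ⥤ Type u) (F) (x : Θ.obj F) :
    (unitApp Θ).app F x = (yonedaCompIso A).inv.app F.unop ≫ (muA A).map (yonedaEquiv.symm x) :=
  rfl

variable (A) in
def unit : 𝟭 ((Aᵒᵖ ⥤ Type u)ᵒᵖ ⥤ Type u) ⟶ muA A ⋙ yoneda where
  app := unitApp
  naturality Θ Θ' τ := by
    ext F : 2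
    ext x
    change (unitApp Θ').app F (τ.app F x) = (unitApp Θ).app F x ≫ (muA A).map τ
    rw [unitApp_app_apply, unitApp_app_apply, ← yonedaEquiv_symm_naturality_right,
      Functor.map_comp, Category.assoc]

lemma map_unitApp_comp_yonedaCompIso_hom (Θ : (Aᵒᵖ ⥤ Type u)ᵒᵖ ⥤ Type u) :
    (muA A).map (unitApp Θ) ≫ (yonedaCompIso A).hom.app ((muA A).obj Θ) = 𝟙 _ := by
  ext a (x : Θ.obj (Opposite.op (yoneda.obj a.unop)))
  change yonedaEquiv ((unitApp Θ).app _ x) = x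
  rw [unitApp_app_apply, yonedaEquiv_comp, yonedaEquiv_yonedaCompIso_inv_app_yoneda]
  exact yonedaEquiv.apply_symm_apply x

lemma unitApp_yoneda_comp_map_yonedaCompIso_hom (P : Aᵒᵖ ⥤ Type u) :
    unitApp (yoneda.obj P) ≫ yoneda.map ((yonedaCompIso A).hom.app P) = 𝟙 _ := by
  ext F : 2
  ext (f : F.unop ⟶ P)
  change (unitApp (yoneda.obj P)).app F f ≫ (yonedaCompIso A).hom.app P = f
  rw [unitApp_app_apply, yonedaEquiv_symm_eq_yoneda_map, Category.assoc, ← Functor.comp_map,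
    (yonedaCompIso A).hom.naturality, Iso.inv_hom_id_app_assoc, Functor.id_map]

variable (A) in
def adjunction : muA A ⊣ (yoneda : (Aᵒᵖ ⥤ Type u) ⥤ _) where
  unit := unit A
  counit := (yonedaCompIso A).hom
  left_triangle_components := map_unitApp_comp_yonedaCompIso_hom
  right_triangle_components := unitApp_yoneda_comp_map_yonedaCompIso_hom

end muA

/-- `μ_A` (restriction along the Yoneda embedding) is left adjoint to the Yoneda embedding
of `PSh(A)` into presheaves on `PSh(A)`, with invertible counit: the counit
`μ_A (y_{PSh(A)} P) ⟶ P` is the Yoneda isomorphism `(a ↦ Hom(y_A a, P)) ≅ P`. -/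
theorem muA_adjoint_yonedaPSh_with_iso_counit :
    ∃ adj : muA A ⊣ (yoneda : (Aᵒᵖ ⥤ Type u) ⥤ ((Aᵒᵖ ⥤ Type u)ᵒᵖ ⥤ Type u)),
      IsIso adj.counit :=
  ⟨muA.adjunction A, (muA.yonedaCompIso A).isIso_hom⟩
end

section
/- If J : X ⥤ Y is a functor such that left Kan extension along J exists as a functor J_! : (X ⥤ Y) ⥤ (Y ⥤ Y) left adjoint to restriction J^*, then the operation F ◁ G := (J_! F) ⋙ G makes the functor category X ⥤ Y into a (left) skew-monoidal category with unit J: there are natural transformations γ_{F,G,H} : (F ◁ G) ◁ H ⟶ F ◁ (G ◁ H), λ_F : J ◁ F ⟶ F, ρ_F : F ⟶ F ◁ J satisfying the five skew-monoidal coherence axioms (skew pentagon, two skew unit triangles, the zig-zag λ_J ∘ ρ_J = 1_J, and the interpolated zig-zag (F ◁ λ_G) ∘ γ_{F,J,G} ∘ (ρ_F ◁ G) = 1_{F ◁ G}). -/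
/-!
Every structure map comes from the adjunction `J_! ⊣ J^*`: `ρ` is its unit, `λ` whiskers its
counit at `𝟭 Y`, and `γ_{F,G,H}` is `H` whiskered into the adjoint transpose
`J_!(J_!F ∘ G) ⟶ J_!F ∘ J_!G` of `J_!F ∗ η_G`. Maps out of `J_! K` are determined by their
transposes along the unit, so each coherence axiom for this transpose reduces to naturality
of the unit, the interchange law and the triangle identities of the adjunction.
-/

open CategoryTheory Functor

universe v₁ v₂ u₁ u₂

namespace LanSkewMonoidal

variable {X : Type u₁} [Category.{v₁} X] {Y : Type u₂} [Category.{v₂} Y]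
  {J : X ⥤ Y} {Jl : (X ⥤ Y) ⥤ (Y ⥤ Y)} (adj : Jl ⊣ (whiskeringLeft X Y Y).obj J)

def comparison (F G : X ⥤ Y) : Jl.obj (G ⋙ Jl.obj F) ⟶ Jl.obj G ⋙ Jl.obj F :=
  (adj.homEquiv _ _).symm (whiskerRight (adj.unit.app G) (Jl.obj F))

lemma unit_comp_whiskerLeft_comparison (F G : X ⥤ Y) :
    adj.unit.app (G ⋙ Jl.obj F) ≫ whiskerLeft J (comparison adj F G) =
      whiskerRight (adj.unit.app G) (Jl.obj F) :=
  (adj.homEquiv_unit _ _ _).symm.trans ((adj.homEquiv _ _).apply_symm_apply _)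

lemma unit_comp_whiskerLeft_map {A B : X ⥤ Y} (t : A ⟶ B) :
    adj.unit.app A ≫ whiskerLeft J (Jl.map t) = t ≫ adj.unit.app B :=
  (adj.unit.naturality t).symm

lemma hom_ext {K : X ⥤ Y} {M : Y ⥤ Y} {φ ψ : Jl.obj K ⟶ M}
    (h : adj.unit.app K ≫ whiskerLeft J φ = adj.unit.app K ≫ whiskerLeft J ψ) : φ = ψ :=
  (adj.homEquiv K M).injective (by rwa [adj.homEquiv_unit, adj.homEquiv_unit])

lemma comparison_naturality_left {F F' : X ⥤ Y} (x : F ⟶ F') (G : X ⥤ Y) :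
    Jl.map (whiskerLeft G (Jl.map x)) ≫ comparison adj F' G =
      comparison adj F G ≫ whiskerLeft (Jl.obj G) (Jl.map x) := by
  apply hom_ext adj
  rw [whiskerLeft_comp, whiskerLeft_comp, ← Category.assoc, unit_comp_whiskerLeft_map,
    Category.assoc, unit_comp_whiskerLeft_comparison, ← Category.assoc,
    unit_comp_whiskerLeft_comparison]
  exact whiskerLeft_comp_whiskerRight _ _

lemma comparison_naturality_right (F : X ⥤ Y) {G G' : X ⥤ Y} (y : G ⟶ G') :
    Jl.map (whiskerRight y (Jl.obj F)) ≫ comparison adj F G' =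
      comparison adj F G ≫ whiskerRight (Jl.map y) (Jl.obj F) := by
  apply hom_ext adj
  rw [whiskerLeft_comp, whiskerLeft_comp, ← Category.assoc, unit_comp_whiskerLeft_map,
    Category.assoc, unit_comp_whiskerLeft_comparison, ← Category.assoc,
    unit_comp_whiskerLeft_comparison, ← whiskerRight_comp, ← unit_comp_whiskerLeft_map,
    whiskerRight_comp]
  rfl

lemma comparison_whiskerLeft_counit (F : X ⥤ Y) :
    comparison adj J F ≫ whiskerLeft (Jl.obj F) (adj.counit.app (𝟭 Y)) =
      Jl.map (whiskerLeft F (adj.counit.app (𝟭 Y))) := by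
  apply hom_ext adj
  rw [whiskerLeft_comp, ← Category.assoc, unit_comp_whiskerLeft_map,
    unit_comp_whiskerLeft_comparison]
  exact (whiskerLeft_comp_whiskerRight (adj.unit.app F) (adj.counit.app (𝟭 Y))).symm

lemma unit_comp_whiskerLeft_counit (M : Y ⥤ Y) :
    adj.unit.app (J ⋙ M) ≫ whiskerLeft J (adj.counit.app M) = 𝟙 (J ⋙ M) :=
  adj.right_triangle_components M

lemma unit_comp_whiskerLeft_counit_id :
    adj.unit.app J ≫ whiskerLeft J (adj.counit.app (𝟭 Y)) = 𝟙 J :=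
  adj.right_triangle_components (𝟭 Y)

lemma comparison_whiskerRight_counit (F : X ⥤ Y) :
    comparison adj F J ≫ whiskerRight (adj.counit.app (𝟭 Y)) (Jl.obj F) =
      adj.counit.app (Jl.obj F) := by
  have triangle := congrArg (whiskerRight · (Jl.obj F)) (unit_comp_whiskerLeft_counit_id adj)
  rw [whiskerRight_comp] at triangle
  apply hom_ext adj
  rw [whiskerLeft_comp, ← Category.assoc, unit_comp_whiskerLeft_comparison,
    unit_comp_whiskerLeft_counit]
  exact triangle.trans (Functor.whiskerRight_id' _)

lemma comparison_pentagon (F G H : X ⥤ Y) :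
    comparison adj (G ⋙ Jl.obj F) H ≫ whiskerLeft (Jl.obj H) (comparison adj F G) =
      Jl.map (whiskerLeft H (comparison adj F G)) ≫ comparison adj F (H ⋙ Jl.obj G) ≫
        whiskerRight (comparison adj G H) (Jl.obj F) := by
  apply hom_ext adj
  calc _ = whiskerRight (adj.unit.app H) (Jl.obj (G ⋙ Jl.obj F)) ≫
          whiskerLeft J (whiskerLeft (Jl.obj H) (comparison adj F G)) := by
        rw [whiskerLeft_comp, ← Category.assoc, unit_comp_whiskerLeft_comparison]
    _ = whiskerLeft H (comparison adj F G) ≫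
          whiskerRight (whiskerRight (adj.unit.app H) (Jl.obj G)) (Jl.obj F) :=
        (whiskerLeft_comp_whiskerRight (adj.unit.app H) (comparison adj F G)).symm
    _ = whiskerLeft H (comparison adj F G) ≫
          whiskerRight (adj.unit.app (H ⋙ Jl.obj G) ≫ whiskerLeft J (comparison adj G H))
            (Jl.obj F) := by
        rw [unit_comp_whiskerLeft_comparison]
    _ = whiskerLeft H (comparison adj F G) ≫ adj.unit.app (H ⋙ Jl.obj G ⋙ Jl.obj F) ≫
          whiskerLeft J (comparison adj F (H ⋙ Jl.obj G)) ≫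
            whiskerLeft J (whiskerRight (comparison adj G H) (Jl.obj F)) := by
        rw [whiskerRight_comp, ← unit_comp_whiskerLeft_comparison, Category.assoc]
        rfl
    _ = _ := by
        rw [← reassoc_of% unit_comp_whiskerLeft_map, whiskerLeft_comp, whiskerLeft_comp]

end LanSkewMonoidal

/-- If left Kan extension along `J : X ⥤ Y` exists as a functor `J_!` left adjoint to
restriction `J^*`, then `F ◁ G := J_! F ⋙ G` (i.e. the composite `J_!F ⋅ G`, in Lean written
`G ⋙ J_!.obj F`) makes `X ⥤ Y` into a left skew-monoidal category with unit `J`: there are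
natural families `γ`, `λ`, `ρ` satisfying the five skew-monoidal coherence axioms. -/
theorem skew_monoidal_structure_on_functor_category
    {X : Type u₁} [Category.{v₁} X] {Y : Type u₂} [Category.{v₂} Y]
    (J : X ⥤ Y) (Jl : (X ⥤ Y) ⥤ (Y ⥤ Y))
    (adj : Jl ⊣ (Functor.whiskeringLeft X Y Y).obj J) :
    ∃ (γ : ∀ F G H : X ⥤ Y, (H ⋙ Jl.obj (G ⋙ Jl.obj F)) ⟶ ((H ⋙ Jl.obj G) ⋙ Jl.obj F))
      (lam : ∀ F : X ⥤ Y, (F ⋙ Jl.obj J) ⟶ F)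
      (rho : ∀ F : X ⥤ Y, F ⟶ (J ⋙ Jl.obj F)),
      -- naturality of `γ` in its first variable
      (∀ {F F' : X ⥤ Y} (x : F ⟶ F') (G H : X ⥤ Y),
        Functor.whiskerLeft H (Jl.map (Functor.whiskerLeft G (Jl.map x))) ≫ γ F' G H =
          γ F G H ≫ Functor.whiskerLeft (H ⋙ Jl.obj G) (Jl.map x)) ∧
      -- naturality of `γ` in its second variable
      (∀ (F : X ⥤ Y) {G G' : X ⥤ Y} (y : G ⟶ G') (H : X ⥤ Y),
        Functor.whiskerLeft H (Jl.map (Functor.whiskerRight y (Jl.obj F))) ≫ γ F G' H =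
          γ F G H ≫ Functor.whiskerRight (Functor.whiskerLeft H (Jl.map y)) (Jl.obj F)) ∧
      -- naturality of `γ` in its third variable
      (∀ (F G : X ⥤ Y) {H H' : X ⥤ Y} (z : H ⟶ H'),
        Functor.whiskerRight z (Jl.obj (G ⋙ Jl.obj F)) ≫ γ F G H' =
          γ F G H ≫ Functor.whiskerRight (Functor.whiskerRight z (Jl.obj G)) (Jl.obj F)) ∧
      -- naturality of `λ`
      (∀ {F F' : X ⥤ Y} (x : F ⟶ F'),
        Functor.whiskerRight x (Jl.obj J) ≫ lam F' = lam F ≫ x) ∧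
      -- naturality of `ρ`
      (∀ {F F' : X ⥤ Y} (x : F ⟶ F'),
        x ≫ rho F' = rho F ≫ Functor.whiskerLeft J (Jl.map x)) ∧
      -- (skm1) skew pentagon
      (∀ F G H K : X ⥤ Y,
        γ (G ⋙ Jl.obj F) H K ≫ γ F G (K ⋙ Jl.obj H) =
          Functor.whiskerLeft K (Jl.map (γ F G H)) ≫ γ F (H ⋙ Jl.obj G) K ≫
            Functor.whiskerRight (γ G H K) (Jl.obj F)) ∧
      -- (skm2, right unit triangle) `γ_{F,G,J} ∘ ρ_{F ◁ G} = F ◁ ρ_G`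
      (∀ F G : X ⥤ Y,
        rho (G ⋙ Jl.obj F) ≫ γ F G J = Functor.whiskerRight (rho G) (Jl.obj F)) ∧
      -- (skm2, left unit triangle) `λ_{F ◁ G} ∘ γ_{J,F,G} = λ_F ◁ G`
      (∀ F G : X ⥤ Y,
        γ J F G ≫ lam (G ⋙ Jl.obj F) = Functor.whiskerLeft G (Jl.map (lam F))) ∧
      -- (skm3) zig-zag identity `λ_J ∘ ρ_J = 1_J`
      (rho J ≫ lam J = 𝟙 J) ∧
      -- (skm4) interpolated zig-zag identity
      (∀ F G : X ⥤ Y,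
        Functor.whiskerLeft G (Jl.map (rho F)) ≫ γ F J G ≫ Functor.whiskerRight (lam G) (Jl.obj F) =
          𝟙 (G ⋙ Jl.obj F)) := by
  open LanSkewMonoidal in
  refine ⟨fun F G H => whiskerLeft H (comparison adj F G),
    fun F => whiskerLeft F (adj.counit.app (𝟭 Y)), adj.unit.app,
    ?_, ?_, ?_, ?_, ?_, ?_, ?_, ?_, ?_, ?_⟩
  -- `whiskerLeft H` distributes over `≫` definitionally, so no rewriting is needed below.
  · intro F F' x G H
    exact congrArg (whiskerLeft H) (comparison_naturality_left adj x G)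
  · intro F G G' y H
    exact congrArg (whiskerLeft H) (comparison_naturality_right adj F y)
  · intro F G H H' z
    exact (whiskerLeft_comp_whiskerRight z (comparison adj F G)).symm
  · intro F F' x
    exact (whiskerLeft_comp_whiskerRight x (adj.counit.app (𝟭 Y))).symm
  · intro F F' x
    exact (unit_comp_whiskerLeft_map adj x).symm
  · intro F G H K
    exact congrArg (whiskerLeft K) (comparison_pentagon adj F G H)
  · exact unit_comp_whiskerLeft_comparison adj
  · intro F G
    exact congrArg (whiskerLeft G) (comparison_whiskerLeft_counit adj F)
  · exact unit_comp_whiskerLeft_counit_id adj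
  · intro F G
    have zigzag : Jl.map (adj.unit.app F) ≫ comparison adj F J ≫
        whiskerRight (adj.counit.app (𝟭 Y)) (Jl.obj F) = 𝟙 (Jl.obj F) := by
      rw [comparison_whiskerRight_counit]
      exact adj.left_triangle_components F
    exact congrArg (whiskerLeft G) zigzag
end

section
/- The composition law of the Kleisli bicategory of a normal relative monad is associative: let T be a J-relative monad (a monoid for the skew structure ◁) with unit η : J ⟶ T and multiplication μ : T ◁ T ⟶ T, such that ρ_T : T ⟶ T ◁ J and λ_T : J ◁ T ⟶ T are invertible. Define composition of Kleisli 1-cells f : JX ⟶ TY, g : JY ⟶ TZ by g • f = μ_Z ∘ (T ◁ g) ∘ ρ_Y ∘ f. Then for f : JW ⟶ TZ', g : JZ' ⟶ TX, h : JX ⟶ TY, one has (h • g) • f = h • (g • f), and η is a two-sided unit: η_Y • f = f and f • η_X = f. -/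
open CategoryTheory

universe v₁ v₂ u₁ u₂

variable {C : Type u₁} [Category.{v₁} C] {D : Type u₂} [Category.{v₂} D]

/-- The associator-component `γ̃_{F,G} ∗ H` of the skew-monoidal structure
`F ◁ G = J_!F ⋅ G` on `C ⥤ D`, obtained as the mate of `J_!F ∗ η_G` under `J_! ⊣ J^*`. -/
noncomputable def skewGamma (J : C ⥤ D) (Jl : (C ⥤ D) ⥤ (D ⥤ D))
    (adj : Jl ⊣ (Functor.whiskeringLeft C D D).obj J) (F G H : C ⥤ D) :
    (H ⋙ Jl.obj (G ⋙ Jl.obj F)) ⟶ ((H ⋙ Jl.obj G) ⋙ Jl.obj F) :=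
  Functor.whiskerLeft H ((adj.homEquiv (G ⋙ Jl.obj F) (Jl.obj G ⋙ Jl.obj F)).symm
    (Functor.whiskerRight (adj.unit.app G) (Jl.obj F)))

/-- The Kleisli composition of a normal `J`-relative monad `T`:
for `f : JX ⟶ TY` and `g : JY ⟶ TZ`, `g • f := μ_Z ∘ (T ◁ g) ∘ ρ_Y ∘ f`. -/
def kleisliComp (J : C ⥤ D) (Jl : (C ⥤ D) ⥤ (D ⥤ D))
    (adj : Jl ⊣ (Functor.whiskeringLeft C D D).obj J) (T : C ⥤ D)
    (μ : (T ⋙ Jl.obj T) ⟶ T) {Xo Yo Zo : C}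
    (g : J.obj Yo ⟶ T.obj Zo) (f : J.obj Xo ⟶ T.obj Yo) : J.obj Xo ⟶ T.obj Zo :=
  f ≫ (adj.unit.app T).app Yo ≫ (Jl.obj T).map g ≫ μ.app Zo

/-! Writing `g* := μ ∘ J_!T(g) ∘ ρ : T Y ⟶ T Z` for the Kleisli extension of `g : J Y ⟶ T Z`,
the composite is `g • f = g* ∘ f`. The left unit law `η* = 1` is a component of
`μ ∘ (T ◁ η) ∘ ρ = 1`; the right unit law `g* ∘ η = g` follows from `μ ∘ (η ◁ T) = λ` and a
triangle identity of `J_! ⊣ J^*`. Associativity amounts to `h* ∘ g* = (h* ∘ g)*`, which holds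
because `h*` is a map of `μ`-algebras, `h* ∘ μ = μ ∘ J_!T(h*)`: this is skew associativity at a
component, transported along the naturality of the unit, of `J_!μ` and of the mate defining the
associator. -/

section KleisliExtension

variable (J : C ⥤ D) (Jl : (C ⥤ D) ⥤ (D ⥤ D)) (adj : Jl ⊣ (Functor.whiskeringLeft C D D).obj J)

lemma unit_app_comp_homEquiv_symm_app {F : C ⥤ D} {G : D ⥤ D} (φ : F ⟶ J ⋙ G) (X : C) :
    (adj.unit.app F).app X ≫ ((adj.homEquiv F G).symm φ).app (J.obj X) = φ.app X := by
  have h := (adj.homEquiv F G).apply_symm_apply φ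
  rw [Adjunction.homEquiv_unit] at h
  exact NatTrans.congr_app h X

lemma unit_app_comp_map_comp_counit_app {X : C} {d : D} (f : J.obj X ⟶ d) :
    (adj.unit.app J).app X ≫ (Jl.obj J).map f ≫ (adj.counit.app (𝟭 D)).app d = f := by
  have counit_nat : (Jl.obj J).map f ≫ (adj.counit.app (𝟭 D)).app d =
      (adj.counit.app (𝟭 D)).app (J.obj X) ≫ f :=
    (adj.counit.app (𝟭 D)).naturality f
  have triangle : (adj.unit.app J).app X ≫ (adj.counit.app (𝟭 D)).app (J.obj X) =
      𝟙 (J.obj X) :=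
    NatTrans.congr_app (adj.right_triangle_components (𝟭 D)) X
  rw [counit_nat, ← Category.assoc, triangle]
  exact Category.id_comp f

variable (T : C ⥤ D) (μ : (T ⋙ Jl.obj T) ⟶ T)

def kleisliExt {Y Z : C} (g : J.obj Y ⟶ T.obj Z) : T.obj Y ⟶ T.obj Z :=
  (adj.unit.app T).app Y ≫ (Jl.obj T).map g ≫ μ.app Z

lemma kleisliComp_eq_comp_kleisliExt {X Y Z : C} (g : J.obj Y ⟶ T.obj Z)
    (f : J.obj X ⟶ T.obj Y) :
    kleisliComp J Jl adj T μ g f = f ≫ kleisliExt J Jl adj T μ g := rfl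

lemma kleisliExt_eta_app (η : J ⟶ T)
    (unit_right : adj.unit.app T ≫ Functor.whiskerRight η (Jl.obj T) ≫ μ = 𝟙 T) (Y : C) :
    kleisliExt J Jl adj T μ (η.app Y) = 𝟙 (T.obj Y) :=
  NatTrans.congr_app unit_right Y

lemma eta_app_comp_kleisliExt (η : J ⟶ T)
    (unit_left : Functor.whiskerLeft T (Jl.map η) ≫ μ =
      Functor.whiskerLeft T (adj.counit.app (𝟭 D)))
    {X Y : C} (f : J.obj X ⟶ T.obj Y) :
    η.app X ≫ kleisliExt J Jl adj T μ f = f := by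
  have unit_nat : η.app X ≫ (adj.unit.app T).app X =
      (adj.unit.app J).app X ≫ (Jl.map η).app (J.obj X) :=
    NatTrans.congr_app (adj.unit.naturality η) X
  have unit_left_app : (Jl.map η).app (T.obj Y) ≫ μ.app Y =
      (adj.counit.app (𝟭 D)).app (T.obj Y) :=
    NatTrans.congr_app unit_left Y
  calc η.app X ≫ kleisliExt J Jl adj T μ f
      = (adj.unit.app J).app X ≫ ((Jl.map η).app (J.obj X) ≫ (Jl.obj T).map f) ≫ μ.app Y := by
        simp only [kleisliExt, ← Category.assoc, unit_nat]
    _ = (adj.unit.app J).app X ≫ (Jl.obj J).map f ≫ (Jl.map η).app (T.obj Y) ≫ μ.app Y := by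
        rw [← (Jl.map η).naturality f]; simp only [Category.assoc]
    _ = f := by rw [unit_left_app, unit_app_comp_map_comp_counit_app]

lemma map_kleisliExt_comp_app
    (assoc_law : skewGamma J Jl adj T T T ≫ Functor.whiskerRight μ (Jl.obj T) ≫ μ =
      Functor.whiskerLeft T (Jl.map μ) ≫ μ)
    {Y Z : C} (g : J.obj Y ⟶ T.obj Z) :
    (Jl.obj T).map (kleisliExt J Jl adj T μ g) ≫ μ.app Z =
      μ.app Y ≫ kleisliExt J Jl adj T μ g := by
  set σ := (adj.homEquiv (T ⋙ Jl.obj T) (Jl.obj T ⋙ Jl.obj T)).symm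
    (Functor.whiskerRight (adj.unit.app T) (Jl.obj T))
  have mate_app : (adj.unit.app (T ⋙ Jl.obj T)).app Y ≫ σ.app (J.obj Y) =
      (Jl.obj T).map ((adj.unit.app T).app Y) :=
    unit_app_comp_homEquiv_symm_app J Jl adj _ Y
  have assoc_app : σ.app (T.obj Z) ≫ (Jl.obj T).map (μ.app Z) ≫ μ.app Z =
      (Jl.map μ).app (T.obj Z) ≫ μ.app Z :=
    NatTrans.congr_app assoc_law Z
  have mate_nat : (Jl.obj (T ⋙ Jl.obj T)).map g ≫ σ.app (T.obj Z) =
      σ.app (J.obj Y) ≫ (Jl.obj T).map ((Jl.obj T).map g) :=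
    σ.naturality g
  have unit_nat : μ.app Y ≫ (adj.unit.app T).app Y =
      (adj.unit.app (T ⋙ Jl.obj T)).app Y ≫ (Jl.map μ).app (J.obj Y) :=
    NatTrans.congr_app (adj.unit.naturality μ) Y
  calc (Jl.obj T).map (kleisliExt J Jl adj T μ g) ≫ μ.app Z
      = (adj.unit.app (T ⋙ Jl.obj T)).app Y ≫ (σ.app (J.obj Y) ≫
          (Jl.obj T).map ((Jl.obj T).map g)) ≫ (Jl.obj T).map (μ.app Z) ≫ μ.app Z := by
        simp only [kleisliExt, Functor.map_comp, ← mate_app, Category.assoc]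
    _ = (adj.unit.app (T ⋙ Jl.obj T)).app Y ≫ (Jl.obj (T ⋙ Jl.obj T)).map g ≫
          (Jl.map μ).app (T.obj Z) ≫ μ.app Z := by
        rw [← mate_nat, Category.assoc, assoc_app]
    _ = μ.app Y ≫ kleisliExt J Jl adj T μ g := by
        rw [(Jl.map μ).naturality_assoc g]
        simp only [kleisliExt, ← Category.assoc, unit_nat]

lemma kleisliExt_comp_kleisliExt
    (assoc_law : skewGamma J Jl adj T T T ≫ Functor.whiskerRight μ (Jl.obj T) ≫ μ =
      Functor.whiskerLeft T (Jl.map μ) ≫ μ)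
    {X Y Z : C} (g : J.obj X ⟶ T.obj Y) (h : J.obj Y ⟶ T.obj Z) :
    kleisliExt J Jl adj T μ g ≫ kleisliExt J Jl adj T μ h =
      kleisliExt J Jl adj T μ (g ≫ kleisliExt J Jl adj T μ h) := by
  conv_rhs => rw [kleisliExt, Functor.map_comp, Category.assoc,
    map_kleisliExt_comp_app J Jl adj T μ assoc_law h]
  simp only [kleisliExt, Category.assoc]

end KleisliExtension

theorem kleisli_bicategory_of_normal_relative_monad_general
    (J : C ⥤ D) (Jl : (C ⥤ D) ⥤ (D ⥤ D))
    (adj : Jl ⊣ (Functor.whiskeringLeft C D D).obj J)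
    (T : C ⥤ D) (η : J ⟶ T) (μ : (T ⋙ Jl.obj T) ⟶ T)
    -- skew unit law: `μ ∘ (η ◁ T) = λ_T`
    (unit_left : Functor.whiskerLeft T (Jl.map η) ≫ μ = Functor.whiskerLeft T (adj.counit.app (𝟭 D)))
    -- skew unit law: `μ ∘ (T ◁ η) ∘ ρ_T = 1_T`
    (unit_right : adj.unit.app T ≫ Functor.whiskerRight η (Jl.obj T) ≫ μ = 𝟙 T)
    -- skew associativity: `μ ∘ (T ◁ μ) ∘ γ = μ ∘ (μ ◁ T)`
    (assoc_law : skewGamma J Jl adj T T T ≫ Functor.whiskerRight μ (Jl.obj T) ≫ μ =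
      Functor.whiskerLeft T (Jl.map μ) ≫ μ) :
    (∀ (Xo Yo : C) (f : J.obj Xo ⟶ T.obj Yo),
      kleisliComp J Jl adj T μ (η.app Yo) f = f) ∧
    (∀ (Xo Yo : C) (f : J.obj Xo ⟶ T.obj Yo),
      kleisliComp J Jl adj T μ f (η.app Xo) = f) ∧
    (∀ (W Z' Xo Yo : C) (f : J.obj W ⟶ T.obj Z') (g : J.obj Z' ⟶ T.obj Xo)
      (h : J.obj Xo ⟶ T.obj Yo),
      kleisliComp J Jl adj T μ (kleisliComp J Jl adj T μ h g) f =
        kleisliComp J Jl adj T μ h (kleisliComp J Jl adj T μ g f)) := by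
  simp only [kleisliComp_eq_comp_kleisliExt]
  refine ⟨fun _ Y f => ?_, fun _ _ f => eta_app_comp_kleisliExt J Jl adj T μ η unit_left f,
    fun _ _ _ _ f g h => ?_⟩
  · rw [kleisliExt_eta_app J Jl adj T μ η unit_right Y, Category.comp_id]
  · rw [Category.assoc, kleisliExt_comp_kleisliExt J Jl adj T μ assoc_law]

/-- The Kleisli bicategory of a normal relative monad is unital and associative: if
`T : C ⥤ D` is a `J`-relative monad (a `◁`-monoid with unit `η : J ⟶ T` and multiplication
`μ : T ◁ T ⟶ T`, satisfying the skew unit laws and skew associativity) whose unitors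
`ρ_T` and `λ_T` are invertible, then the Kleisli composition `g • f = μ ∘ (T ◁ g) ∘ ρ ∘ f`
is associative and has the components of `η` as two-sided identities. -/
theorem kleisli_bicategory_of_normal_relative_monad
    (J : C ⥤ D) (Jl : (C ⥤ D) ⥤ (D ⥤ D))
    (adj : Jl ⊣ (Functor.whiskeringLeft C D D).obj J)
    (T : C ⥤ D) (η : J ⟶ T) (μ : (T ⋙ Jl.obj T) ⟶ T)
    -- skew unit law: `μ ∘ (η ◁ T) = λ_T`
    (unit_left : Functor.whiskerLeft T (Jl.map η) ≫ μ = Functor.whiskerLeft T (adj.counit.app (𝟭 D)))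
    -- skew unit law: `μ ∘ (T ◁ η) ∘ ρ_T = 1_T`
    (unit_right : adj.unit.app T ≫ Functor.whiskerRight η (Jl.obj T) ≫ μ = 𝟙 T)
    -- skew associativity: `μ ∘ (T ◁ μ) ∘ γ = μ ∘ (μ ◁ T)`
    (assoc_law : skewGamma J Jl adj T T T ≫ Functor.whiskerRight μ (Jl.obj T) ≫ μ =
      Functor.whiskerLeft T (Jl.map μ) ≫ μ)
    -- normality: `ρ_T` and `λ_T` are invertible
    (hrho : IsIso (adj.unit.app T))
    (hlam : IsIso (Functor.whiskerLeft T (adj.counit.app (𝟭 D)))) :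
    (∀ (Xo Yo : C) (f : J.obj Xo ⟶ T.obj Yo),
      kleisliComp J Jl adj T μ (η.app Yo) f = f) ∧
    (∀ (Xo Yo : C) (f : J.obj Xo ⟶ T.obj Yo),
      kleisliComp J Jl adj T μ f (η.app Xo) = f) ∧
    (∀ (W Z' Xo Yo : C) (f : J.obj W ⟶ T.obj Z') (g : J.obj Z' ⟶ T.obj Xo)
      (h : J.obj Xo ⟶ T.obj Yo),
      kleisliComp J Jl adj T μ (kleisliComp J Jl adj T μ h g) f =
        kleisliComp J Jl adj T μ h (kleisliComp J Jl adj T μ g f)) :=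
  kleisli_bicategory_of_normal_relative_monad_general J Jl adj T η μ unit_left unit_right assoc_law
end

section
/- Right unit law for the presheaf relative monad: for a small category A, the composite μ_A ∘ P_!(y_A) : PSh(A) ⥤ PSh(A), where P_!(y_A) : PSh(A) ⥤ PSh_s(PSh(A)) is the Yoneda extension of y_{PSh(A)} ∘ y_A along y_A and μ_A is restriction along y_A, is naturally isomorphic to the identity functor of PSh(A). -/
open CategoryTheory

universe u

variable (A : Type u) [SmallCategory A]

/-- `y_A ⋙ y_{PSh A} ⋙ μ_A ≅ y_A`, by the Yoneda lemma. -/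
noncomputable def eIso : yoneda ⋙ yoneda ⋙ muA A ≅ (yoneda : A ⥤ (Aᵒᵖ ⥤ Type u)) :=
  NatIso.ofComponents
    (fun a => NatIso.ofComponents
      (fun a' => Equiv.toIso yonedaEquiv)
      (by
        intros X Y g
        ext f
        exact (yonedaEquiv_naturality f g.unop).symm))
    (by
      intros a b h
      ext a' f
      exact yonedaEquiv_comp f (yoneda.map h))

/-- Composing a pointwise left Kan extension with a colimit-preserving functor gives a
left Kan extension. -/
lemma isLeftKanExtension_comp_of_preservesColimits
    {C : Type*} [Category C] {D : Type*} [Category D] {H : Type*} [Category H]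
    {H' : Type*} [Category H'] (L : C ⥤ D) (F : C ⥤ H) (F' : D ⥤ H)
    (α : F ⟶ L ⋙ F') [F'.IsLeftKanExtension α] [L.HasPointwiseLeftKanExtension F]
    (G : H ⥤ H') [∀ (Y : D), Limits.PreservesColimitsOfShape (CostructuredArrow L Y) G] :
    (F' ⋙ G).IsLeftKanExtension
      (Functor.whiskerRight α G ≫ (Functor.associator L F' G).hom) := by
  have h := Functor.isPointwiseLeftKanExtensionOfIsLeftKanExtension F' α
  apply Functor.LeftExtension.IsPointwiseLeftKanExtension.isLeftKanExtension
    (E := Functor.LeftExtension.mk _ (Functor.whiskerRight α G ≫ (Functor.associator L F' G).hom))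
  intro Y
  exact Limits.IsColimit.ofIsoColimit (Limits.isColimitOfPreserves G (h Y))
    (Limits.Cocones.ext (Iso.refl _) (fun g => by dsimp; simp; exact (Category.comp_id _).trans (G.map_comp (α.app g.left) (F'.map g.hom))))

/-- Right unit law for the presheaf relative monad: if `K = P_!(y_A)` is the Yoneda
extension of `y_{PSh(A)} ∘ y_A` along `y_A` (i.e. a left Kan extension of
`yoneda ⋙ yoneda : A ⥤ PSh(PSh(A))` along `yoneda : A ⥤ PSh(A)`), then `μ_A ∘ K` is
naturally isomorphic to the identity of `PSh(A)`. -/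
theorem presheaf_monad_right_unit
    (K : (Aᵒᵖ ⥤ Type u) ⥤ ((Aᵒᵖ ⥤ Type u)ᵒᵖ ⥤ Type u))
    (α : yoneda ⋙ yoneda ⟶ yoneda ⋙ K) [K.IsLeftKanExtension α] :
    Nonempty ((K ⋙ muA A) ≅ 𝟭 (Aᵒᵖ ⥤ Type u)) := by
  have hP : ∀ (Y : Aᵒᵖ ⥤ Type u),
      Limits.PreservesColimitsOfShape (CostructuredArrow yoneda Y) (muA A) := by
    intro Y
    unfold muA
    infer_instance
  have h₁ : (K ⋙ muA A).IsLeftKanExtension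
      (Functor.whiskerRight α (muA A) ≫ (Functor.associator yoneda K (muA A)).hom) :=
    isLeftKanExtension_comp_of_preservesColimits yoneda (yoneda ⋙ yoneda) K α (muA A)
  have h₂ : (𝟭 (Aᵒᵖ ⥤ Type u)).IsLeftKanExtension
      ((yoneda : A ⥤ (Aᵒᵖ ⥤ Type u)).rightUnitor.symm.hom) :=
    inferInstanceAs ((𝟭 (Aᵒᵖ ⥤ Type u)).IsLeftKanExtension
      (yoneda : A ⥤ (Aᵒᵖ ⥤ Type u)).rightUnitor.inv)
  exact ⟨Functor.leftKanExtensionUniqueOfIso (K ⋙ muA A)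
    (Functor.whiskerRight α (muA A) ≫ (Functor.associator yoneda K (muA A)).hom)
    (eIso A) (𝟭 _) (yoneda : A ⥤ (Aᵒᵖ ⥤ Type u)).rightUnitor.symm.hom⟩
end

section
/- Lax idempotency of the presheaf construction: for a small category A, there is an adjunction μ_A ⊣ y_{PSh(A)} with invertible counit, where μ_A : PSh_s(PSh(A)) ⥤ PSh(A) is restriction along y_A and y_{PSh(A)} : PSh(A) ⥤ PSh_s(PSh(A)) is the Yoneda embedding. The counit μ_A(y_{PSh(A)}(F)) ⟶ F is the Yoneda isomorphism a ↦ Hom(y_A a, F) ≅ F a, and the unit at Θ is the canonical map Θ(F) ⟶ Hom_{PSh(A)}(F, a ↦ Θ(y_A a)) induced by the action of Θ on morphisms. -/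
open CategoryTheory

universe u

variable (A : Type u) [SmallCategory A]

/-! Taking the Yoneda isomorphism `Hom(y_A a, F) ≅ F a` as the counit makes it invertible for
free. What is left is the unit `x ↦ (g ↦ Θ(g)(x))` and the triangle identities, which are the two
halves of the Yoneda bijection: `Θ(𝟙)(x) = x` and `yonedaEquiv (yonedaEquiv.symm g ≫ x) = x g`. -/

open Opposite

def yonedaCompMuAIso : yoneda ⋙ muA A ≅ 𝟭 (Aᵒᵖ ⥤ Type u) := curriedYonedaLemma'

def muAUnitApp (Θ : (Aᵒᵖ ⥤ Type u)ᵒᵖ ⥤ Type u) : Θ ⟶ yoneda.obj ((muA A).obj Θ) where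
  app G := TypeCat.ofHom fun x =>
    { app a := TypeCat.ofHom fun g => Θ.map (yonedaEquiv.symm g).op x
      naturality a b f := by
        ext g
        dsimp [muA]
        rw [yonedaEquiv_symm_map, op_comp, Functor.map_comp_apply] }
  naturality G H f := by
    ext : 2
    dsimp
    ext x a g
    dsimp [muA]
    rw [← yonedaEquiv_symm_naturality_right, op_comp, Functor.map_comp_apply, Quiver.Hom.op_unop]

@[simp]
lemma muAUnitApp_app_apply_app_apply (Θ : (Aᵒᵖ ⥤ Type u)ᵒᵖ ⥤ Type u) (G : (Aᵒᵖ ⥤ Type u)ᵒᵖ)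
    (x : Θ.obj G) (a : Aᵒᵖ) (g : G.unop.obj a) :
    (((muAUnitApp A Θ).app G x).app a) g = Θ.map (yonedaEquiv.symm g).op x :=
  rfl

def muAUnit : 𝟭 _ ⟶ muA A ⋙ yoneda where
  app := muAUnitApp A
  naturality Θ Ψ α := by
    ext G : 3
    dsimp
    ext x a g
    dsimp [muA]
    exact (NatTrans.naturality_apply α _ x).symm

lemma yonedaEquiv_muAUnitApp_app (Θ : (Aᵒᵖ ⥤ Type u)ᵒᵖ ⥤ Type u) (a : A)
    (x : Θ.obj (op (yoneda.obj a))) : yonedaEquiv ((muAUnitApp A Θ).app _ x) = x := by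
  have hid : yonedaEquiv.symm (𝟙 a) = 𝟙 (yoneda.obj a) := yonedaEquiv.symm_apply_eq.2 rfl
  rw [yonedaEquiv_apply, muAUnitApp_app_apply_app_apply, hid, op_id, Functor.map_id_apply]

lemma muAUnitApp_app_comp_yonedaCompMuAIso_hom_app (F : Aᵒᵖ ⥤ Type u)
    (G : (Aᵒᵖ ⥤ Type u)ᵒᵖ) (x : G.unop ⟶ F) :
    (muAUnitApp A (yoneda.obj F)).app G x ≫ (yonedaCompMuAIso A).hom.app F = x := by
  ext a g
  exact (yonedaEquiv_comp _ x).trans (congrArg (x.app a) (yonedaEquiv.apply_symm_apply g))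

def muAYonedaAdjunction : muA A ⊣ yoneda where
  unit := muAUnit A
  counit := (yonedaCompMuAIso A).hom
  left_triangle_components Θ := by
    ext a x
    exact yonedaEquiv_muAUnitApp_app A Θ a.unop x
  right_triangle_components F := by
    ext G : 2
    exact ConcreteCategory.hom_ext _ _ (muAUnitApp_app_comp_yonedaCompMuAIso_hom_app A F G)

/-- Lax idempotency of the presheaf construction: there is an adjunction
`μ_A ⊣ y_{PSh(A)}` with invertible counit, where `μ_A` is restriction along `y_A` and
`y_{PSh(A)}` is the Yoneda embedding of `PSh(A)`; the counit `μ_A (y_{PSh(A)} F) ⟶ F` is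
the Yoneda isomorphism `(a ↦ Hom(y_A a, F)) ≅ F`, and the unit at `Θ` is the canonical map
`Θ(F) ⟶ Hom(F, a ↦ Θ(y_A a))` induced by the action of `Θ` on morphisms. -/
theorem presheaf_construction_lax_idempotent :
    ∃ adj : muA A ⊣ (yoneda : (Aᵒᵖ ⥤ Type u) ⥤ ((Aᵒᵖ ⥤ Type u)ᵒᵖ ⥤ Type u)),
      IsIso adj.counit :=
  ⟨muAYonedaAdjunction A, inferInstanceAs (IsIso (yonedaCompMuAIso A).hom)⟩
end
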